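/- For r ≥ 3, the element of L_r labeled by the all-ones column is a loose element of L_r; for r ≥ 4, the element of J_r labeled by the column (0,1,1,…,1)^T is a loose element of J_r; and for any restriction N of M_r (r ≥ 2) or of N_r (r ≥ 3) that has no coloops and whose ground set contains the distinguished element z, the element z is a loose element of N. -/

import Mathlib

namespace LoosePaper

open Set
open scoped Matroid

variable {α β : Type*}

/-- A circuit of a matroid: a minimal dependent set. -/
def Circuit (M : Matroid α) (C : Set α) : Prop :=
  M.Dep C ∧ ∀ D, M.Dep D → D ⊆ C → D = C

/-- The rank of a matroid: the (common) cardinality of its bases. -/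
noncomputable def rank (M : Matroid α) : ℕ :=
  sInf {n | ∃ B, M.IsBase B ∧ B.ncard = n}

/-- An element is loose if every circuit containing it has size at least the rank. -/
def Loose (M : Matroid α) (e : α) : Prop :=
  e ∈ M.E ∧ ∀ C, Circuit M C → e ∈ C → rank M ≤ C.ncard

/-- An element is free if every circuit containing it is spanning. -/
def FreeElt (M : Matroid α) (e : α) : Prop :=
  e ∈ M.E ∧ ∀ C, Circuit M C → e ∈ C → M.closure C = M.E

/-- A coloop: an element contained in every base. -/
def Coloop (M : Matroid α) (e : α) : Prop :=
  e ∈ M.E ∧ ∀ B, M.IsBase B → e ∈ B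

def NoColoops (M : Matroid α) : Prop := ∀ e, ¬ Coloop M e

/-- A matroid is simple if every pair of its elements is independent. -/
def Simple (M : Matroid α) : Prop :=
  ∀ e ∈ M.E, ∀ f ∈ M.E, M.Indep {e, f}

/-- A matroid is paving if every circuit has size at least the rank. -/
def Paving (M : Matroid α) : Prop :=
  ∀ C, Circuit M C → rank M ≤ C.ncard

/-- `M` is representable over the field `F`. -/
def Representable (M : Matroid α) (F : Type*) [Field F] : Prop :=
  ∃ (ι : Type) (v : α → ι → F),
    ∀ I, I ⊆ M.E → (M.Indep I ↔ LinearIndependent F (fun x : I => v x.1))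

/-- `N` is the vector matroid, on ground set all of `η`, of the matrix whose
column labelled by `c : η` is `A c`. -/
def IsVectorMatroidOn (F : Type*) [Field F] {η ι : Type*} (A : η → ι → F)
    (N : Matroid η) : Prop :=
  N.E = Set.univ ∧ ∀ I : Set η, (N.Indep I ↔ LinearIndependent F (fun x : I => A x.1))

/-- `φ` is an isomorphism from `M` to `N`. -/
def IsIsoTo (M : Matroid α) (N : Matroid β) (φ : α → β) : Prop :=
  Set.BijOn φ M.E N.E ∧ ∀ I, I ⊆ M.E → (M.Indep I ↔ N.Indep (φ '' I))

/-- The matrix `[I_r | D]` of the matroid `M_r`; the column `Sum.inl i` is the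
`i`-th standard basis vector, the column `Sum.inr 0` (the distinguished element `z`)
is the all-ones vector, and for `1 ≤ j ≤ r-1` the column `Sum.inr j` has ones
exactly in rows `0` and `j` (`0`-indexed). -/
def MrMatrix (r : ℕ) : (Fin r ⊕ Fin r) → Fin r → ZMod 2
  | Sum.inl i => fun k => if k = i then 1 else 0
  | Sum.inr j => fun k =>
      if j.val = 0 then 1 else if k.val = 0 ∨ k = j then 1 else 0

/-- The matrix `[I_r | D]` of the matroid `N_r`; the column `Sum.inr 0`
(the distinguished element `z`) is `(0,1,…,1)ᵀ`, and for `1 ≤ j ≤ r-2` the column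
`Sum.inr j` has ones exactly in rows `0`, `1` and `j+1` (`0`-indexed). -/
def NrMatrix (r : ℕ) : (Fin r ⊕ Fin (r - 1)) → Fin r → ZMod 2
  | Sum.inl i => fun k => if k = i then 1 else 0
  | Sum.inr j => fun k =>
      if j.val = 0 then (if k.val = 0 then 0 else 1)
      else if k.val = 0 ∨ k.val = 1 ∨ k.val = j.val + 1 then 1 else 0

/-- The matrix `[I_r | D]` of the matroid `L_r`; the columns of `D` are the all-ones
vector, `(1,1,0,…,0)ᵀ`, `(1,0,1,0,…,0)ᵀ` and `(0,1,1,0,…,0)ᵀ`. -/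
def LrMatrix (r : ℕ) : (Fin r ⊕ Fin 4) → Fin r → ZMod 2
  | Sum.inl i => fun k => if k = i then 1 else 0
  | Sum.inr j => fun k =>
      if j = 0 then 1
      else if j = 1 then (if k.val = 0 ∨ k.val = 1 then 1 else 0)
      else if j = 2 then (if k.val = 0 ∨ k.val = 2 then 1 else 0)
      else if k.val = 1 ∨ k.val = 2 then 1 else 0

/-- The matrix `[I_r | D]` of the matroid `J_r`; the columns of `D` are
`(0,1,1,…,1)ᵀ`, `(1,1,1,0,…,0)ᵀ`, `(1,1,0,1,0,…,0)ᵀ` and `(1,0,1,1,0,…,0)ᵀ`. -/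
def JrMatrix (r : ℕ) : (Fin r ⊕ Fin 4) → Fin r → ZMod 2
  | Sum.inl i => fun k => if k = i then 1 else 0
  | Sum.inr j => fun k =>
      if j = 0 then (if k.val = 0 then 0 else 1)
      else if j = 1 then (if k.val = 0 ∨ k.val = 1 ∨ k.val = 2 then 1 else 0)
      else if j = 2 then (if k.val = 0 ∨ k.val = 1 ∨ k.val = 3 then 1 else 0)
      else if k.val = 0 ∨ k.val = 2 ∨ k.val = 3 then 1 else 0

/-- A matrix over `GF(3)` whose vector matroid is `U_{2,4}`. -/
def U24Matrix : Fin 4 → Fin 2 → ZMod 3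
  | 0 => fun k => if k = 0 then 1 else 0
  | 1 => fun k => if k = 1 then 1 else 0
  | 2 => fun _ => 1
  | 3 => fun k => if k = 0 then 1 else 2

/-- A `GF(3)`-matrix representing the matroid obtained from a circuit
`{e, c_0, …, c_{n-1}}` (where `e` is the element `Sum.inl ()`) by 2-summing a copy
of `U_{2,4}` across each element `c_d` with `d ∈ D`.  For `d ∉ D` the element
`Sum.inr (d, 0)` is `c_d`, and for `d ∈ D` the elements `Sum.inr (d, j)`,
`j = 0, 1, 2`, are the three elements of the copy of `U_{2,4}` other than its
basepoint. -/
def thetaMatrix (n : ℕ) (D : Finset (Fin n)) :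
    (Unit ⊕ Fin n × Fin 3) → (Fin n ⊕ Fin n) → ZMod 3
  | Sum.inl _ => fun row => Sum.elim (fun _ => 1) (fun _ => 0) row
  | Sum.inr (d, j) => fun row =>
      let ed : (Fin n ⊕ Fin n) → ZMod 3 :=
        Sum.elim (fun i => if i = d then 1 else 0) (fun _ => 0)
      let wd : (Fin n ⊕ Fin n) → ZMod 3 :=
        Sum.elim (fun _ => 0) (fun i => if i = d then 1 else 0)
      if d ∈ D then
        (if j = 0 then wd row else if j = 1 then ed row + wd row else ed row - wd row)
      else ed row

/-- The ground set of the 2-sum construction: the circuit element `e`, the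
untouched circuit elements `c_d` for `d ∉ D`, and three `U_{2,4}`-elements for
each `d ∈ D`. -/
def thetaGround (n : ℕ) (D : Finset (Fin n)) : Set (Unit ⊕ Fin n × Fin 3) :=
  {x | ∀ d : Fin n, ∀ j : Fin 3, x = Sum.inr (d, j) → (j = 0 ∨ d ∈ D)}

/-! The columns of a circuit of a binary vector matroid sum to zero, so every row in which the
distinguished element `z` has a one forces a further element into each circuit `C` through `z`.
In `M_r` and `N_r` these rows (for `N_r` with rows `0` and `1` added together) yield `r - 1`
pairwise disjoint sets of elements other than `z`, each of which `C` must meet. In `L_r` and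
`J_r` the rows beyond the first three (resp. four) are supported on `z` and one unit column, so
`z` is in series with those unit columns and they all lie in `C`; what remains is the case
`r = 3` (resp. `r = 4`), checked exhaustively. Either way `|C| ≥ r`, and `r` bounds the rank. -/

section BinaryVectorMatroid

variable {ι V : Type*}

lemma not_linearIndependent_of_sum_eq_zero {R : Type*} [Ring R] [Nontrivial R] [AddCommGroup V]
    [Module R V] {v : ι → V} {t : Finset ι} (ht : t.Nonempty) (hsum : ∑ i ∈ t, v i = 0) :
    ¬ LinearIndependent R (fun i : t => v i) := by
  rw [Fintype.not_linearIndependent_iff]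
  obtain ⟨i, hi⟩ := ht
  exact ⟨fun _ => 1, by simpa only [one_smul, Finset.sum_coe_sort t v] using hsum, ⟨i, hi⟩,
    one_ne_zero⟩

lemma exists_sum_eq_zero_of_not_linearIndependent [Fintype ι] [AddCommGroup V]
    [Module (ZMod 2) V] {v : ι → V} (h : ¬ LinearIndependent (ZMod 2) v) :
    ∃ t : Finset ι, t.Nonempty ∧ ∑ i ∈ t, v i = 0 := by
  classical
  obtain ⟨g, hg, i, hi⟩ := Fintype.not_linearIndependent_iff.1 h
  refine ⟨Finset.univ.filter (g · ≠ 0), ⟨i, by simpa using hi⟩, ?_⟩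
  calc ∑ j ∈ Finset.univ.filter (g · ≠ 0), v j
      = ∑ j ∈ Finset.univ.filter (g · ≠ 0), g j • v j :=
        Finset.sum_congr rfl fun j hj => by
          rw [show g j = 1 from Fin.eq_one_of_ne_zero _ (Finset.mem_filter.1 hj).2, one_smul]
    _ = ∑ j, g j • v j := Finset.sum_filter_of_ne fun j _ hj h0 => hj (by rw [h0, zero_smul])
    _ = 0 := hg

lemma circuit_iff_isCircuit {M : Matroid α} {C : Set α} : Circuit M C ↔ M.IsCircuit C := by
  rw [Matroid.isCircuit_iff]; rfl

lemma Circuit.of_restrict {M : Matroid α} {R C : Set α} (hR : R ⊆ M.E)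
    (hC : Circuit (M ↾ R) C) : Circuit M C := by
  rw [circuit_iff_isCircuit, Matroid.restrict_isCircuit_iff hR] at hC
  exact circuit_iff_isCircuit.2 hC.1

lemma rank_le_of_forall_indep_linearIndependent {K : Type*} [Field K] [Fintype ι]
    {M : Matroid α} {v : α → ι → K}
    (hv : ∀ I, M.Indep I → LinearIndependent K (fun x : I => v x)) :
    rank M ≤ Fintype.card ι := by
  obtain ⟨B, hB⟩ := M.exists_isBase
  have hB_li := hv B hB.indep
  have : Fintype B := @Fintype.ofFinite _ hB_li.finite
  calc rank M ≤ B.ncard := Nat.sInf_le ⟨B, hB, rfl⟩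
    _ = Fintype.card B := by rw [← Nat.card_coe_set_eq, Nat.card_eq_fintype_card]
    _ ≤ Module.finrank K (ι → K) := hB_li.fintype_card_le_finrank
    _ = Fintype.card ι := Module.finrank_fintype_fun_eq_card K

lemma sum_eq_zero_of_circuit {M : Matroid α} {v : α → V} [AddCommGroup V]
    [Module (ZMod 2) V] (hv : ∀ I, M.Indep I ↔ LinearIndependent (ZMod 2) (fun x : I => v x))
    {C : Finset α} (hC : Circuit M C) : ∑ x ∈ C, v x = 0 := by
  classical
  obtain ⟨t, ht, hsum⟩ :=
    exists_sum_eq_zero_of_not_linearIndependent ((hv C).not.1 hC.1.not_indep)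
  set T := t.map (Function.Embedding.subtype (· ∈ (C : Set α)))
  have hTsum : ∑ x ∈ T, v x = 0 := by rwa [Finset.sum_map]
  have hTC : (T : Set α) ⊆ C := by
    rw [Finset.coe_map]
    rintro _ ⟨x, -, rfl⟩
    exact x.2
  have hTdep : M.Dep T := by
    refine ⟨fun hT => not_linearIndependent_of_sum_eq_zero ht.map hTsum ((hv T).1 hT), ?_⟩
    exact hTC.trans hC.1.subset_ground
  rwa [Finset.coe_inj.1 (hC.2 T hTdep hTC)] at hTsum

lemma loose_restrict_of_forall_le_card {η : Type*} [Finite η] {r : ℕ} {A : η → Fin r → ZMod 2}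
    {N : Matroid η} (hN : IsVectorMatroidOn (ZMod 2) A N) {R : Set η} {e : η} (he : e ∈ R)
    (hA : ∀ s : Finset η, e ∈ s → ∑ x ∈ s, A x = 0 → r ≤ s.card) :
    Loose (N ↾ R) e := by
  refine ⟨he, fun C hC heC => ?_⟩
  obtain ⟨s, rfl⟩ := C.toFinite.exists_finset_coe
  have hrank : rank (N ↾ R) ≤ r := by
    simpa using rank_le_of_forall_indep_linearIndependent
      fun I hI => (hN.2 I).1 (Matroid.restrict_indep_iff.1 hI).1
  have hsum : ∑ x ∈ s, A x = 0 :=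
    sum_eq_zero_of_circuit hN.2 (hC.of_restrict (hN.1 ▸ Set.subset_univ R))
  rw [Set.ncard_coe_finset]
  exact hrank.trans (hA s heC hsum)

end BinaryVectorMatroid

section ZeroSumSets

open Sum

variable {r : ℕ}

lemma exists_ne_apply_ne_zero_of_sum_eq_zero {γ G : Type*} [AddCommMonoid G] {s : Finset γ}
    {f : γ → G} (hs : ∑ x ∈ s, f x = 0) {z : γ} (hz : z ∈ s) (hfz : f z ≠ 0) :
    ∃ x ∈ s, x ≠ z ∧ f x ≠ 0 := by
  by_contra! h
  exact hfz (by rwa [Finset.sum_eq_single_of_mem z hz h] at hs)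

lemma le_card_of_forall_exists_mem_apply_eq {γ : Type*} {s : Finset γ} (f : γ → Fin r)
    (hf : ∀ k, ∃ x ∈ s, f x = k) : r ≤ s.card := by
  have := Finset.card_le_card_of_surjOn (t := (Finset.univ : Finset (Fin r))) f
    fun k _ => hf k
  rwa [Finset.card_univ, Fintype.card_fin] at this

lemma eq_of_MrMatrix_ne_zero (hr : 0 < r) {x : Fin r ⊕ Fin r} {k : Fin r} (hk : k.val ≠ 0)
    (hx : x ≠ inr ⟨0, hr⟩) (h : MrMatrix r x k ≠ 0) : Sum.elim id id x = k := by
  rcases x with i | j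
  · simp only [MrMatrix, ne_eq, ite_eq_right_iff, one_ne_zero, imp_false, not_not] at h
    exact h.symm
  · have hj : j.val ≠ 0 := fun h => hx (congrArg inr (Fin.ext h))
    simp only [MrMatrix, hj, hk, false_or, if_false, ne_eq, ite_eq_right_iff, one_ne_zero,
      imp_false, not_not] at h
    exact h.symm

/-- Row `k ≠ 0` of `M_r` is supported on `z`, `e_k` and `d_k`, so `s` contains `e_k` or `d_k`. -/
lemma le_card_of_sum_MrMatrix_eq_zero (hr : 0 < r) {s : Finset (Fin r ⊕ Fin r)}
    (hz : inr ⟨0, hr⟩ ∈ s) (hs : ∑ x ∈ s, MrMatrix r x = 0) : r ≤ s.card := by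
  refine le_card_of_forall_exists_mem_apply_eq (Sum.elim id id) fun k => ?_
  by_cases hk : k.val = 0
  · exact ⟨_, hz, Fin.ext hk.symm⟩
  obtain ⟨x, hxs, hxz, hx⟩ := exists_ne_apply_ne_zero_of_sum_eq_zero (f := (MrMatrix r · k))
    (by simpa using congrFun hs k) hz (by simp [MrMatrix])
  exact ⟨x, hxs, eq_of_MrMatrix_ne_zero hr hk hxz hx⟩

/-- Groups the elements of `N_r` as `{e_0, e_1}`, `{z}` and `{e_k, d_{k-1}}` for `k ≥ 2`. -/
def NrGroup (hr : 0 < r) : Fin r ⊕ Fin (r - 1) → Fin r :=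
  Sum.elim (fun i => if i.val ≤ 1 then ⟨0, hr⟩ else i) (fun j => ⟨j.val + 1, by omega⟩)

lemma NrGroup_eq_of_NrMatrix_ne_zero (hr : 1 < r) {x : Fin r ⊕ Fin (r - 1)} {k : Fin r}
    (hk : 2 ≤ k.val) (hx : x ≠ inr ⟨0, by omega⟩) (h : NrMatrix r x k ≠ 0) :
    NrGroup (by omega) x = k := by
  rcases x with i | j
  · simp only [NrMatrix, ne_eq, ite_eq_right_iff, one_ne_zero, imp_false, not_not] at h
    subst h
    simp [NrGroup, show ¬ k.val ≤ 1 by omega]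
  · have hj : j.val ≠ 0 := fun h => hx (congrArg inr (Fin.ext h))
    simp only [NrMatrix, hj, if_false, ne_eq, ite_eq_right_iff, one_ne_zero,
      imp_false, not_not] at h
    exact Fin.ext (by simp [NrGroup]; omega)

lemma NrGroup_eq_zero_of_NrMatrix_add_ne_zero (hr : 1 < r) {x : Fin r ⊕ Fin (r - 1)}
    (hx : x ≠ inr ⟨0, by omega⟩)
    (h : NrMatrix r x ⟨0, by omega⟩ + NrMatrix r x ⟨1, by omega⟩ ≠ 0) :
    NrGroup (by omega) x = ⟨0, by omega⟩ := by
  rcases x with i | j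
  · have hi : i.val ≤ 1 := by
      by_contra hi
      simp [NrMatrix, Fin.ext_iff, show 0 ≠ i.val by omega, show 1 ≠ i.val by omega] at h
    simp [NrGroup, hi]
  · have hj : j.val ≠ 0 := fun h => hx (congrArg inr (Fin.ext h))
    simp [NrMatrix, hj, CharTwo.add_self_eq_zero] at h

lemma le_card_of_sum_NrMatrix_eq_zero (hr : 1 < r) {s : Finset (Fin r ⊕ Fin (r - 1))}
    (hz : inr ⟨0, by omega⟩ ∈ s) (hs : ∑ x ∈ s, NrMatrix r x = 0) : r ≤ s.card := by
  refine le_card_of_forall_exists_mem_apply_eq (NrGroup (by omega)) fun k => ?_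
  have hrow : ∀ i, ∑ x ∈ s, NrMatrix r x i = 0 := fun i => by simpa using congrFun hs i
  by_cases hk0 : k.val = 0
  · obtain ⟨x, hxs, hxz, hx⟩ := exists_ne_apply_ne_zero_of_sum_eq_zero
      (f := fun x => NrMatrix r x ⟨0, by omega⟩ + NrMatrix r x ⟨1, by omega⟩)
      (by rw [Finset.sum_add_distrib, hrow, hrow, add_zero]) hz (by simp [NrMatrix])
    exact ⟨x, hxs, (NrGroup_eq_zero_of_NrMatrix_add_ne_zero hr hxz hx).trans (Fin.ext hk0.symm)⟩
  by_cases hk1 : k.val = 1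
  · exact ⟨_, hz, Fin.ext (by simp [NrGroup, hk1])⟩
  obtain ⟨x, hxs, hxz, hx⟩ := exists_ne_apply_ne_zero_of_sum_eq_zero (f := (NrMatrix r · k))
    (hrow k) hz (by simp [NrMatrix, hk0])
  exact ⟨x, hxs, NrGroup_eq_of_NrMatrix_ne_zero hr (by omega) hxz hx⟩

lemma card_add_sub_le_card {m : ℕ} (hm : m ≤ r) {s : Finset (Fin r ⊕ β)}
    {t : Finset (Fin m ⊕ β)} (ht : ∀ x ∈ t, Sum.map (Fin.castLE hm) id x ∈ s)
    (hnew : ∀ j : Fin r, m ≤ j.val → inl j ∈ s) : t.card + (r - m) ≤ s.card := by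
  classical
  set e : Fin m ⊕ β ↪ Fin r ⊕ β := (Fin.castLEEmb hm).sumMap (Function.Embedding.refl β)
  set new : Finset (Fin r ⊕ β) := Finset.univ.map
    ⟨fun k : Fin (r - m) => inl ⟨m + k, by omega⟩, fun a b h => by simpa [Fin.ext_iff] using h⟩
  have hdisj : Disjoint (t.map e) new := by
    simp only [Finset.disjoint_left, Finset.mem_map, Finset.mem_univ, true_and, new, e]
    rintro _ ⟨x, -, rfl⟩ ⟨k, hk⟩
    rcases x with i | b
    · change inl _ = inl _ at hk
      simp only [inl.injEq, Fin.ext_iff, Fin.coe_castLEEmb, Fin.val_castLE] at hk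
      omega
    · simp at hk
  calc t.card + (r - m) = (t.map e ∪ new).card := by
        rw [Finset.card_union_of_disjoint hdisj]; simp [new]
    _ ≤ s.card := by
      refine Finset.card_le_card (Finset.union_subset ?_ ?_)
      · simpa [Finset.subset_iff, e] using ht
      · simp only [Finset.subset_iff, Finset.mem_map, Finset.mem_univ, true_and, new]
        rintro _ ⟨k, rfl⟩
        exact hnew _ (by simp)

/-- The hypotheses say that `A` arises from `B` by series-extending `z` with one new unit column
`e_i` for each new row `i ≥ m`: every zero-sum set through `z` contains all the `e_i`, so the
bound `m` for `B` lifts to the bound `r` for `A`. -/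
lemma le_card_of_seriesExtension {m : ℕ} (hm : m ≤ r) {A : Fin r ⊕ β → Fin r → ZMod 2}
    {B : Fin m ⊕ β → Fin m → ZMod 2} {z : β}
    (hAB : ∀ x i, A (Sum.map (Fin.castLE hm) id x) (Fin.castLE hm i) = B x i)
    (hnew : ∀ (j : Fin r) (i : Fin m), m ≤ j.val → A (inl j) (Fin.castLE hm i) = 0)
    (hrow : ∀ i : Fin r, m ≤ i.val → ∀ x, A x i ≠ 0 ↔ x = inl i ∨ x = inr z)
    (hB : ∀ t : Finset (Fin m ⊕ β), inr z ∈ t → ∑ x ∈ t, B x = 0 → m ≤ t.card)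
    {s : Finset (Fin r ⊕ β)} (hz : inr z ∈ s) (hs : ∑ x ∈ s, A x = 0) : r ≤ s.card := by
  have hrow_sum : ∀ i, ∑ x ∈ s, A x i = 0 := fun i => by simpa using congrFun hs i
  have hnew_mem : ∀ j : Fin r, m ≤ j.val → inl j ∈ s := by
    intro j hj
    obtain ⟨x, hxs, hxz, hx⟩ := exists_ne_apply_ne_zero_of_sum_eq_zero (hrow_sum j) hz
      ((hrow j hj _).2 (Or.inr rfl))
    rcases (hrow j hj x).1 hx with rfl | rfl
    · exact hxs
    · exact absurd rfl hxz
  have he : Function.Injective (Sum.map (Fin.castLE hm) (id : β → β)) :=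
    Sum.map_injective.2 ⟨Fin.castLE_injective hm, Function.injective_id⟩
  set t := s.preimage (Sum.map (Fin.castLE hm) id) he.injOn
  have ht : ∑ x ∈ t, B x = 0 := by
    ext i
    rw [Finset.sum_apply, Pi.zero_apply]
    calc ∑ x ∈ t, B x i = ∑ x ∈ t, A (Sum.map (Fin.castLE hm) id x) (Fin.castLE hm i) := by
          simp [hAB]
      _ = ∑ y ∈ s, A y (Fin.castLE hm i) := by
        refine Finset.sum_preimage _ s he.injOn (A · (Fin.castLE hm i)) fun y _ hy => ?_
        rcases y with j | b
        · exact hnew j i (not_lt.1 fun hj => hy ⟨inl ⟨j, hj⟩, rfl⟩)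
        · exact absurd ⟨inr b, rfl⟩ hy
      _ = 0 := hrow_sum _
  calc r = m + (r - m) := by omega
    _ ≤ t.card + (r - m) := by gcongr; exact hB t (by simpa [t]) ht
    _ ≤ s.card := card_add_sub_le_card hm (fun x hx => Finset.mem_preimage.1 hx) hnew_mem

set_option maxRecDepth 10000 in
lemma le_card_of_sum_LrMatrix_three_eq_zero :
    ∀ t : Finset (Fin 3 ⊕ Fin 4), inr 0 ∈ t → ∑ x ∈ t, LrMatrix 3 x = 0 → 3 ≤ t.card := by
  decide

set_option maxRecDepth 10000 in
lemma le_card_of_sum_JrMatrix_four_eq_zero :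
    ∀ t : Finset (Fin 4 ⊕ Fin 4), inr 0 ∈ t → ∑ x ∈ t, JrMatrix 4 x = 0 → 4 ≤ t.card := by
  decide

lemma le_card_of_sum_LrMatrix_eq_zero (hr : 3 ≤ r) {s : Finset (Fin r ⊕ Fin 4)}
    (hz : inr 0 ∈ s) (hs : ∑ x ∈ s, LrMatrix r x = 0) : r ≤ s.card := by
  refine le_card_of_seriesExtension hr ?_ ?_ ?_
    le_card_of_sum_LrMatrix_three_eq_zero hz hs
  · rintro (j | j) i
    · simp [LrMatrix, Fin.ext_iff]
    · fin_cases j <;> simp [LrMatrix]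
  · intro j i hj
    simp [LrMatrix, Fin.ext_iff]
    omega
  · rintro i hi (j | j)
    · simp [LrMatrix, eq_comm]
    · fin_cases j <;> simp [LrMatrix] <;> omega

lemma le_card_of_sum_JrMatrix_eq_zero (hr : 4 ≤ r) {s : Finset (Fin r ⊕ Fin 4)}
    (hz : inr 0 ∈ s) (hs : ∑ x ∈ s, JrMatrix r x = 0) : r ≤ s.card := by
  refine le_card_of_seriesExtension hr ?_ ?_ ?_
    le_card_of_sum_JrMatrix_four_eq_zero hz hs
  · rintro (j | j) i
    · simp [JrMatrix, Fin.ext_iff]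
    · fin_cases j <;> simp [JrMatrix]
  · intro j i hj
    simp [JrMatrix, Fin.ext_iff]
    omega
  · rintro i hi (j | j)
    · simp [JrMatrix, eq_comm]
    · fin_cases j <;> simp [JrMatrix] <;> omega

end ZeroSumSets

/-- easy direction of Theorem 1.1: the distinguished elements of
`L_r` (`r ≥ 3`) and `J_r` (`r ≥ 4`) are loose, and the distinguished element `z` is
loose in every coloop-free restriction of `M_r` (`r ≥ 2`) or `N_r` (`r ≥ 3`) whose
ground set contains `z`. -/
theorem distinguished_elements_loose :
    (∀ r : ℕ, 3 ≤ r → ∀ L : Matroid (Fin r ⊕ Fin 4),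
        IsVectorMatroidOn (ZMod 2) (LrMatrix r) L →
        Loose L (Sum.inr 0)) ∧
    (∀ r : ℕ, 4 ≤ r → ∀ J : Matroid (Fin r ⊕ Fin 4),
        IsVectorMatroidOn (ZMod 2) (JrMatrix r) J →
        Loose J (Sum.inr 0)) ∧
    (∀ r : ℕ, ∀ hr : 2 ≤ r, ∀ MM : Matroid (Fin r ⊕ Fin r),
        IsVectorMatroidOn (ZMod 2) (MrMatrix r) MM →
        ∀ R : Set (Fin r ⊕ Fin r), Sum.inr (⟨0, by omega⟩ : Fin r) ∈ R →
          NoColoops (MM ↾ R) →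
          Loose (MM ↾ R) (Sum.inr (⟨0, by omega⟩ : Fin r))) ∧
    (∀ r : ℕ, ∀ hr : 3 ≤ r, ∀ NN : Matroid (Fin r ⊕ Fin (r - 1)),
        IsVectorMatroidOn (ZMod 2) (NrMatrix r) NN →
        ∀ R : Set (Fin r ⊕ Fin (r - 1)),
          Sum.inr (⟨0, by omega⟩ : Fin (r - 1)) ∈ R →
          NoColoops (NN ↾ R) →
          Loose (NN ↾ R) (Sum.inr (⟨0, by omega⟩ : Fin (r - 1)))) := by
  refine ⟨fun r hr L hL => ?_, fun r hr J hJ => ?_, fun r hr MM hMM R hzR _ => ?_,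
    fun r hr NN hNN R hzR _ => ?_⟩
  · rw [← L.restrict_ground_eq_self, hL.1]
    exact loose_restrict_of_forall_le_card hL (Set.mem_univ _)
      fun _ => le_card_of_sum_LrMatrix_eq_zero hr
  · rw [← J.restrict_ground_eq_self, hJ.1]
    exact loose_restrict_of_forall_le_card hJ (Set.mem_univ _)
      fun _ => le_card_of_sum_JrMatrix_eq_zero hr
  · exact loose_restrict_of_forall_le_card hMM hzR
      fun _ => le_card_of_sum_MrMatrix_eq_zero (by omega)
  · exact loose_restrict_of_forall_le_card hNN hzR
      fun _ => le_card_of_sum_NrMatrix_eq_zero (by omega)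

end LoosePaper
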